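/- arXiv:2101.09171 — 2 statements merged into one kernel-verified Lean document; each statement's English description precedes it below -/
import Mathlib

section
/- Conversely, if for some fixed (α,β,γ) there exists a function f : ZMod 2 → ZMod 2 (possibly depending on x, α, γ) such that for all x, y, a, b with a + b = xy + αx + βy + γ one has f(a) + b = (x+1)y, then β = 1. -/
/-- Conversely: if for parameters `(α,β,γ)` there is a local output-correction
function `f` (allowed to depend on `x`, as well as on `α`, `γ`, but not on `y`
or `b`) such that whenever `a + b = xy + αx + βy + γ` one has
`f x a + b = (x+1)y`, then necessarily `β = 1`. -/
theorem prBox_cheating_forces_beta_one (α β γ : ZMod 2)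
    (f : ZMod 2 → ZMod 2 → ZMod 2)
    (hf : ∀ x y a b : ZMod 2,
      a + b = x * y + α * x + β * y + γ → f x a + b = (x + 1) * y) :
    β = 1 := by
  have h1 := hf 0 0 0 γ (by ring)
  have h2 := hf 0 1 0 (β + γ) (by ring)
  linear_combination h2 - h1
end

section
/- In a causal operational probabilistic theory (one where the deterministic effect e_A of each system A is unique), local operations cannot signal: for any bipartite state Ψ on A⊗B, any observation test {Aᵢ} on A with ∑ᵢ Aᵢ = e_A, and any observation test {Bⱼ} on B with ∑ⱼ Bⱼ = e_B, the marginal probabilities pᵢ = ∑ⱼ (Aᵢ ⊗ Bⱼ)(Ψ) do not depend on the choice of test {Bⱼ}: for any other test {B'ₖ} with ∑ₖ B'ₖ = e_B one has ∑ⱼ (Aᵢ ⊗ Bⱼ)(Ψ) = ∑ₖ (Aᵢ ⊗ B'ₖ)(Ψ). -/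
open scoped TensorProduct

/-- The pairing of a product effect `a ⊗ b` with a bipartite state: the linear
functional on `V_A ⊗ V_B` induced by `(v, w) ↦ a(v) * b(w)`. -/
noncomputable def productEffect {VA VB : Type*}
    [AddCommGroup VA] [Module ℝ VA] [AddCommGroup VB] [Module ℝ VB]
    (a : VA →ₗ[ℝ] ℝ) (b : VB →ₗ[ℝ] ℝ) : VA ⊗[ℝ] VB →ₗ[ℝ] ℝ :=
  TensorProduct.lift ((LinearMap.mul ℝ ℝ).compl₁₂ a b)


lemma productEffect_sum {VA VB : Type*}
    [AddCommGroup VA] [Module ℝ VA] [AddCommGroup VB] [Module ℝ VB]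
    (a : VA →ₗ[ℝ] ℝ) {κ : Type*} [Fintype κ] (B : κ → (VB →ₗ[ℝ] ℝ))
    (Ψ : VA ⊗[ℝ] VB) :
    ∑ j, productEffect a (B j) Ψ = productEffect a (∑ j, B j) Ψ := by
  induction Ψ using TensorProduct.induction_on with
  | zero => simp
  | tmul v w => simp [productEffect, Finset.mul_sum]
  | add x y hx hy =>
      simp only [map_add, Finset.sum_add_distrib, hx, hy]

/-- No signalling without interaction in a causal OPT: for any bipartite state
`Ψ`, any observation test `{Aᵢ}` on `A` summing to the (unique) deterministic
effect `e_A`, and any two observation tests `{Bⱼ}`, `{B'ₖ}` on `B` both summing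
to `e_B`, Alice's marginal probabilities do not depend on Bob's choice of
test. -/
theorem no_signalling_without_interaction
    {VA VB : Type*}
    [AddCommGroup VA] [Module ℝ VA] [FiniteDimensional ℝ VA]
    [AddCommGroup VB] [Module ℝ VB] [FiniteDimensional ℝ VB]
    (eA : VA →ₗ[ℝ] ℝ) (eB : VB →ₗ[ℝ] ℝ)
    (Ψ : VA ⊗[ℝ] VB)
    {ι κ κ' : Type*} [Fintype ι] [Fintype κ] [Fintype κ']
    (A : ι → (VA →ₗ[ℝ] ℝ)) (hA : ∑ i, A i = eA)
    (B : κ → (VB →ₗ[ℝ] ℝ)) (hB : ∑ j, B j = eB)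
    (B' : κ' → (VB →ₗ[ℝ] ℝ)) (hB' : ∑ k, B' k = eB) :
    ∀ i, ∑ j, productEffect (A i) (B j) Ψ = ∑ k, productEffect (A i) (B' k) Ψ := by
  intro i
  rw [productEffect_sum, productEffect_sum, hB, hB']
end
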